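/- Let P be the 3rd order, 2-dimensional stochastic tensor with frontal slices P(:,:,1) = [[1,1/2],[0,1/2]] and P(:,:,2) = [[0,1/2],[1,1/2]]. Then: (a) f_{i i i3} = 1 for all i, i3 ∈ {1,2}, so both states of this second order chain are recurrent; (b) p^{(k)}_{2 1 1} = 0 for every k ≥ 1, so state 2 is not reachable from state 1 (1 ↛ 2); and (c) for every i3 ∈ {1,2} one has p^{(1)}_{1 2 i3} > 0, so state 1 is reachable from state 2 (2 → 1). Hence 2 → 1 holds while 1 → 2 fails even though both states are recurrent; in particular, unlike first order chains, a recurrent state i of a higher order chain with i → j need not satisfy j → i. -/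

import Mathlib

open Finset

/-- A 3rd order, `n`-dimensional tensor: entry `p_{i₁ i₂ i₃}` is `P i₁ i₂ i₃`. -/
abbrev Tensor3 (n : ℕ) := Fin n → Fin n → Fin n → ℝ

/-- The product `A ⊠ B`: `(A ⊠ B)_{i₁ i₂ i₃} = Σ_j a_{i₁ j i₂} b_{j i₂ i₃}`. -/
def tmul3 {n : ℕ} (A B : Tensor3 n) : Tensor3 n :=
  fun i₁ i₂ i₃ => ∑ j : Fin n, A i₁ j i₂ * B j i₂ i₃

/-- Tensor powers: `tpow3 P k` is `P^k`, with entries the `k`-step transition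
probabilities `p^{(k)}_{i₁ i₂ i₃}`; `P^0` is the identity tensor. -/
def tpow3 {n : ℕ} (P : Tensor3 n) : ℕ → Tensor3 n
  | 0 => fun i₁ i₂ _ => if i₁ = i₂ then 1 else 0
  | k + 1 => tmul3 (tpow3 P k) P

/-- `fpp3 P k` is the `(k+1)`-step first passage probability tensor `F^{[k+1]}`:
`f^{[1]} = p` and `f^{[k+1]}_{i₁ i₂ i₃} = Σ_{j ≠ i₁} f^{[k]}_{i₁ j i₂} p_{j i₂ i₃}`. -/
def fpp3 {n : ℕ} (P : Tensor3 n) : ℕ → Tensor3 n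
  | 0 => P
  | k + 1 => fun i₁ i₂ i₃ =>
      ∑ j ∈ Finset.univ.filter (fun j => j ≠ i₁), fpp3 P k i₁ j i₂ * P j i₂ i₃

/-- The ever-reaching probability `f_{i₁ i₂ i₃} = Σ_{k=1}^∞ f^{[k]}_{i₁ i₂ i₃}`. -/
noncomputable def everReach3 {n : ℕ} (P : Tensor3 n) : Tensor3 n :=
  fun i₁ i₂ i₃ => ∑' k : ℕ, fpp3 P k i₁ i₂ i₃

/-- State `j` is reachable from state `i` (`i → j`): for every `i₃` there is
`k ≥ 0` with `p^{(k)}_{j i i₃} > 0`. -/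
def Reach3 {n : ℕ} (P : Tensor3 n) (i j : Fin n) : Prop :=
  ∀ i₃ : Fin n, ∃ k : ℕ, 0 < tpow3 P k j i i₃

/-- The chain is irreducible: for every nonempty proper `K ⊊ S` there are
`i₁ ∈ K` and `i₂, i₃ ∉ K` with `p_{i₁ i₂ i₃} > 0`. -/
def Irreducible3 {n : ℕ} (P : Tensor3 n) : Prop :=
  ∀ K : Set (Fin n), K.Nonempty → K ≠ Set.univ →
    ∃ i₁ ∈ K, ∃ i₂, i₂ ∉ K ∧ ∃ i₃, i₃ ∉ K ∧ 0 < P i₁ i₂ i₃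

/-- The chain is ergodic: for all `i₁ i₂ i₃` there is `k ≥ 1` with `p^{(k)}_{i₁ i₂ i₃} > 0`. -/
def Ergodic3 {n : ℕ} (P : Tensor3 n) : Prop :=
  ∀ i₁ i₂ i₃ : Fin n, ∃ k : ℕ, 1 ≤ k ∧ 0 < tpow3 P k i₁ i₂ i₃

/-- The reduced transition matrix `Q` of a second order chain: rows and columns
are indexed by pairs, `Q (i₁,i₂) (j₁,j₂) = p_{i₁ i₂ j₂}` if `j₁ = i₂`, else `0`. -/
def reduced3 {n : ℕ} (P : Tensor3 n) : Matrix (Fin n × Fin n) (Fin n × Fin n) ℝ :=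
  fun u v => if v.1 = u.2 then P u.1 u.2 v.2 else 0

/-- The transition tensor of Statement 14 (states `1,2` are `0,1 : Fin 2`). -/
noncomputable def P14 : Tensor3 2 := fun i₁ i₂ i₃ =>
  ![!![(1:ℝ), 1/2; 0, 1/2],
    !![0, 1/2; 1, 1/2]] i₃ i₁ i₂

lemma filter_ne_zero : (Finset.univ.filter (fun j => j ≠ (0:Fin 2))) = {1} := by decide
lemma filter_ne_one : (Finset.univ.filter (fun j => j ≠ (1:Fin 2))) = {0} := by decide

lemma P14_000 : P14 0 0 0 = 1 := by simp [P14]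
lemma P14_001 : P14 0 0 1 = 0 := by simp [P14]
lemma P14_010 : P14 0 1 0 = 1/2 := by simp [P14]
lemma P14_011 : P14 0 1 1 = 1/2 := by simp [P14]
lemma P14_100 : P14 1 0 0 = 0 := by simp [P14]
lemma P14_101 : P14 1 0 1 = 1 := by simp [P14]
lemma P14_110 : P14 1 1 0 = 1/2 := by simp [P14]
lemma P14_111 : P14 1 1 1 = 1/2 := by simp [P14]

lemma P14_11 : ∀ i₃ : Fin 2, P14 1 1 i₃ = 1/2 := by
  intro i₃; fin_cases i₃ <;> simp [P14]

lemma e01 : ∀ k (i₃ : Fin 2), fpp3 P14 k 0 1 i₃ = (1/2)^(k+1) := by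
  intro k
  induction k with
  | zero => intro i₃; fin_cases i₃ <;> simp [fpp3, P14_010, P14_011]
  | succ k ih =>
      intro i₃
      show (∑ j ∈ Finset.univ.filter (fun j => j ≠ (0:Fin 2)),
        fpp3 P14 k 0 j 1 * P14 j 1 i₃) = _
      rw [filter_ne_zero, Finset.sum_singleton, ih 1, P14_11]
      ring

lemma e000 : ∀ k, fpp3 P14 k 0 0 0 = if k = 0 then 1 else 0 := by
  intro k
  cases k with
  | zero => simpa [fpp3] using P14_000
  | succ k =>
      show (∑ j ∈ Finset.univ.filter (fun j => j ≠ (0:Fin 2)),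
        fpp3 P14 k 0 j 0 * P14 j 0 0) = _
      rw [filter_ne_zero, Finset.sum_singleton, P14_100]
      simp

lemma e001 : ∀ k, fpp3 P14 k 0 0 1 = if k = 0 then 0 else (1/2)^k := by
  intro k
  cases k with
  | zero => simpa [fpp3] using P14_001
  | succ k =>
      show (∑ j ∈ Finset.univ.filter (fun j => j ≠ (0:Fin 2)),
        fpp3 P14 k 0 j 0 * P14 j 0 1) = _
      rw [filter_ne_zero, Finset.sum_singleton, P14_101, e01 k 0]
      simp

lemma e100 : ∀ k, fpp3 P14 k 1 0 0 = 0 := by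
  intro k
  induction k with
  | zero => simpa [fpp3] using P14_100
  | succ k ih =>
      show (∑ j ∈ Finset.univ.filter (fun j => j ≠ (1:Fin 2)),
        fpp3 P14 k 1 j 0 * P14 j 0 0) = _
      rw [filter_ne_one, Finset.sum_singleton, ih]
      ring

lemma e101 : ∀ k, fpp3 P14 k 1 0 1 = if k = 0 then 1 else 0 := by
  intro k
  cases k with
  | zero => simpa [fpp3] using P14_101
  | succ k =>
      show (∑ j ∈ Finset.univ.filter (fun j => j ≠ (1:Fin 2)),
        fpp3 P14 k 1 j 0 * P14 j 0 1) = _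
      rw [filter_ne_one, Finset.sum_singleton, e100 k]
      simp

lemma e11 : ∀ k (i₃ : Fin 2), fpp3 P14 k 1 1 i₃ =
    if k = 0 then 1/2 else if k = 1 then 1/2 else 0 := by
  intro k i₃
  cases k with
  | zero => fin_cases i₃ <;> simpa [fpp3] using by simp [P14_110, P14_111]
  | succ k =>
      show (∑ j ∈ Finset.univ.filter (fun j => j ≠ (1:Fin 2)),
        fpp3 P14 k 1 j 1 * P14 j 1 i₃) = _
      rw [filter_ne_one, Finset.sum_singleton, e101 k]
      fin_cases i₃ <;> cases k <;> simp [P14_010, P14_011]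

lemma tz : ∀ k, tpow3 P14 k 1 0 0 = 0 := by
  intro k
  induction k with
  | zero => simp [tpow3]
  | succ k ih =>
      show (∑ j : Fin 2, tpow3 P14 k 1 j 0 * P14 j 0 0) = 0
      rw [Fin.sum_univ_two, ih, P14_000, P14_100]
      ring

lemma tone : ∀ i₃ : Fin 2, tpow3 P14 1 0 1 i₃ = 1/2 := by
  intro i₃
  show (∑ j : Fin 2, tpow3 P14 0 0 j 1 * P14 j 1 i₃) = 1/2
  rw [Fin.sum_univ_two]
  show ((if (0:Fin 2) = 0 then (1:ℝ) else 0) * P14 0 1 i₃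
      + (if (0:Fin 2) = 1 then 1 else 0) * P14 1 1 i₃) = 1/2
  fin_cases i₃ <;> simp [P14_010, P14_011]

/-- (a) `f_{i i i₃} = 1` for all `i, i₃`, so both states are
recurrent; (b) `p^{(k)}_{211} = 0` for every `k ≥ 1`, and state `2` is not
reachable from state `1`; (c) `p^{(1)}_{1 2 i₃} > 0` for every `i₃`, and state
`1` is reachable from state `2`. -/
theorem recurrent_reach_asymmetry :
    (∀ i i₃ : Fin 2, everReach3 P14 i i i₃ = 1) ∧
    (∀ k : ℕ, 1 ≤ k → tpow3 P14 k 1 0 0 = 0) ∧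
    ¬ Reach3 P14 0 1 ∧
    (∀ i₃ : Fin 2, 0 < tpow3 P14 1 0 1 i₃) ∧
    Reach3 P14 1 0 := by
  refine ⟨?_, fun k _ => tz k, ?_, ?_, ?_⟩
  · intro i i₃
    fin_cases i
    · fin_cases i₃
      · show (∑' k : ℕ, fpp3 P14 k 0 0 0) = 1
        have : (fun k : ℕ => fpp3 P14 k 0 0 0) = fun k => if k = 0 then (1:ℝ) else 0 := by
          funext k; exact e000 k
        rw [this]
        exact tsum_ite_eq 0 1
      · show (∑' k : ℕ, fpp3 P14 k 0 0 1) = 1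
        have hfun : (fun k : ℕ => fpp3 P14 k 0 0 1)
            = fun k => (1/2:ℝ)^k - (if k = 0 then 1 else 0) := by
          funext k
          rw [e001 k]
          cases k <;> simp
        rw [hfun]
        have hs1 : Summable (fun k : ℕ => (1/2:ℝ)^k) :=
          summable_geometric_of_lt_one (by norm_num) (by norm_num)
        have hs2 : Summable (fun k : ℕ => if k = 0 then (1:ℝ) else 0) :=
          (hasSum_ite_eq 0 (1:ℝ)).summable
        rw [Summable.tsum_sub hs1 hs2, tsum_geometric_of_lt_one (by norm_num) (by norm_num),
          tsum_ite_eq 0 (fun _ => (1:ℝ))]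
        norm_num
    · show (∑' k : ℕ, fpp3 P14 k 1 1 i₃) = 1
      have h := tsum_eq_sum (f := fun k : ℕ => fpp3 P14 k 1 1 i₃) (s := {0, 1}) (L := SummationFilter.unconditional ℕ)
        (by intro k hk
            show fpp3 P14 k 1 1 i₃ = 0
            rw [e11 k i₃]
            simp only [Finset.mem_insert, Finset.mem_singleton] at hk
            push_neg at hk
            simp [hk.1, hk.2])
      rw [h, Finset.sum_insert (by decide), Finset.sum_singleton, e11 0 i₃, e11 1 i₃]
      norm_num
  · intro h
    obtain ⟨k, hk⟩ := h 0
    rw [tz k] at hk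
    exact lt_irrefl 0 hk
  · intro i₃; rw [tone i₃]; norm_num
  · intro i₃; exact ⟨1, by rw [tone i₃]; norm_num⟩
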